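/- For the family of instances G_n consisting of a directed cycle v₁,...,v_{2n} where all edges have cost 1, exactly the edges (v_{2n}, v₁) and (v_n, v_{n+1}) are one-directional (reverse direction given by shortest-path closure), and all other edges symmetric: in the metric closure, the tour (v_n, v_{n−1}, ..., v₁, v_{2n}, v_{2n−1}, ..., v_{n+1}) has cost 6n − 4, while the optimal tour (v₁, v₂, ..., v_{2n}) has cost 2n; hence the ratio tends to 3. -/

import Mathlib

/-!
Every arc has cost 1, so vertices joined by an arc are at distance 1 and all distances are at
least 1; this gives the cost `2n` of the cycle `v₁ → ⋯ → v_{2n} → v₁` and the cost `n - 1` of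
each descending segment. For the two long jumps, a potential that increases by at most 1 along
every arc bounds the distance from below by its increase. The index of a vertex is such a
potential, because the only arc along which it would jump up, `v₁ → v_{2n}`, is missing; the
index shifted by `n` is one because `v_{n+1} → v_n` is missing. Hence
`d(v₁, v_{2n}) = d(v_{n+1}, v_n) = 2n - 1`, and the tour costs `2(n - 1) + 2(2n - 1) = 6n - 4`.
-/

/-- Cost of traversing a list cyclically (wrapping around at the end). -/
def cycleCost {V : Type*} (c : V → V → ℝ) (l : List V) : ℝ :=
  ∑ i : Fin l.length, c (l.get i) (l.get ⟨((i : ℕ) + 1) % l.length, Nat.mod_lt _ i.pos⟩)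

/-- Cost of a path given as the list of its vertices. -/
def pathCost {V : Type*} (c : V → V → ℝ) : List V → ℝ
  | a :: b :: rest => c a b + pathCost c (b :: rest)
  | _ => 0

/-- `l` is a directed path from `u` to `v` along the edge relation `E`. -/
def IsPathOn {V : Type*} (E : V → V → Prop) (u v : V) (l : List V) : Prop :=
  2 ≤ l.length ∧ l.head? = some u ∧ l.getLast? = some v ∧ l.Chain' E

/-- The arc relation of the instance `G_n` (0-indexed: `vᵢ ↦ i - 1`): the directed
cycle `0 → 1 → ⋯ → 2n-1 → 0` (all arcs present), together with all reverse arcs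
except the reverses of `(v_{2n}, v₁) = (2n-1, 0)` and `(v_n, v_{n+1}) = (n-1, n)`. -/
def Erel (n : ℕ) (i j : Fin (2 * n)) : Prop :=
  (j : ℕ) = ((i : ℕ) + 1) % (2 * n) ∨
  ((i : ℕ) = ((j : ℕ) + 1) % (2 * n) ∧
    ¬((j : ℕ) = 2 * n - 1 ∧ (i : ℕ) = 0) ∧
    ¬((j : ℕ) = n - 1 ∧ (i : ℕ) = n))

/-- The metric closure of `G_n`: all arcs have cost 1, so the shortest-path
distance is the minimum number of arcs of a directed path. -/
noncomputable def dist18 (n : ℕ) (u v : Fin (2 * n)) : ℝ :=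
  sInf {x | ∃ l : List (Fin (2 * n)), IsPathOn (Erel n) u v l ∧ ((l.length : ℝ) - 1) = x}

/-- The vertex `v_{k+1}` of `G_n` (0-indexed). -/
def vtx (n : ℕ) (hn : 1 ≤ n) (k : ℕ) : Fin (2 * n) :=
  ⟨k % (2 * n), Nat.mod_lt _ (by omega)⟩

/-- The tour `(v_n, v_{n-1}, …, v₁, v_{2n}, v_{2n-1}, …, v_{n+1})`. -/
def tourBad (n : ℕ) (hn : 1 ≤ n) : List (Fin (2 * n)) :=
  ((List.range n).reverse.map (vtx n hn)) ++
    ((List.range n).reverse.map (fun k => vtx n hn (n + k)))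

/-- The tour `(v₁, v₂, …, v_{2n})`. -/
def tourOpt (n : ℕ) (hn : 1 ≤ n) : List (Fin (2 * n)) :=
  (List.range (2 * n)).map (vtx n hn)

open Filter Topology

namespace List

variable {V : Type*} (c : V → V → ℝ)

theorem pathCost_eq_length_sub_one :
    ∀ {l : List V}, l ≠ [] → l.IsChain (fun a b => c a b = 1) →
      pathCost c l = l.length - 1
  | [_], _, _ => by simp [pathCost]
  | a :: b :: l, _, hl => by
    rw [isChain_cons_cons] at hl
    rw [pathCost, hl.1, pathCost_eq_length_sub_one (cons_ne_nil b l) hl.2]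
    simp only [length_cons, Nat.cast_add, Nat.cast_one]
    ring

theorem pathCost_map_range {f : ℕ → V} {m : ℕ} (hm : 1 ≤ m)
    (hf : ∀ k, k + 1 < m → c (f k) (f (k + 1)) = 1) :
    pathCost c ((range m).map f) = m - 1 := by
  rw [pathCost_eq_length_sub_one c (by simp; omega)]
  · simp
  · rw [isChain_map, isChain_range]
    exact fun k hk => hf k (by omega)

theorem pathCost_map_range_reverse {f : ℕ → V} {m : ℕ} (hm : 1 ≤ m)
    (hf : ∀ k, k + 1 < m → c (f (k + 1)) (f k) = 1) :
    pathCost c ((range m).reverse.map f) = m - 1 := by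
  rw [pathCost_eq_length_sub_one c (by simp; omega)]
  · simp
  · rw [isChain_map, isChain_reverse, isChain_range]
    exact fun k hk => hf k (by omega)

theorem pathCost_append {a b : V} :
    ∀ {l₁ l₂ : List V}, l₁.getLast? = some a → l₂.head? = some b →
      pathCost c (l₁ ++ l₂) = pathCost c l₁ + c a b + pathCost c l₂
  | [_], _ :: _, ha, hb => by
    simp only [getLast?_singleton, Option.some.injEq, head?_cons] at ha hb
    simp [pathCost, ha, hb]
  | x :: y :: l₁, l₂, ha, hb => by
    rw [getLast?_cons_cons] at ha
    simp only [cons_append, pathCost]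
    rw [← cons_append, pathCost_append ha hb]
    ring

theorem pathCost_eq_sum_range (d : V) :
    ∀ l : List V, pathCost c l =
      ∑ i ∈ Finset.range (l.length - 1), c (l.getD i d) (l.getD (i + 1) d)
  | [] => by simp [pathCost]
  | [_] => by simp [pathCost]
  | a :: b :: l => by
    rw [pathCost, pathCost_eq_sum_range d (b :: l)]
    simp only [length_cons, Nat.add_sub_cancel]
    rw [Finset.sum_range_succ']
    simp only [getD_cons_succ, getD_cons_zero]
    ring

theorem cycleCost_eq_sum_range (d : V) (l : List V) :
    cycleCost c l =
      ∑ i ∈ Finset.range l.length, c (l.getD i d) (l.getD ((i + 1) % l.length) d) := by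
  rw [← Fin.sum_univ_eq_sum_range, cycleCost]
  refine Finset.sum_congr rfl fun i _ => ?_
  rw [getD_eq_getElem _ _ i.isLt, getD_eq_getElem _ _ (Nat.mod_lt _ i.pos)]
  rfl

theorem cycleCost_eq_pathCost_add {l : List V} {a b : V} (ha : l.head? = some a)
    (hb : l.getLast? = some b) : cycleCost c l = pathCost c l + c b a := by
  obtain ⟨m, hm⟩ : ∃ m, l.length = m + 1 :=
    ⟨l.length - 1, by cases l <;> simp_all⟩
  rw [cycleCost_eq_sum_range c a, pathCost_eq_sum_range c a, hm, Finset.sum_range_succ,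
    Nat.add_sub_cancel, Nat.mod_self]
  congr 1
  · refine Finset.sum_congr rfl fun i hi => ?_
    rw [Nat.mod_eq_of_lt (by simp at hi; omega)]
  · rw [getLast?_eq_getElem?, hm, Nat.add_sub_cancel] at hb
    rw [head?_eq_getElem?] at ha
    rw [getD_eq_getElem?_getD, hb, getD_eq_getElem?_getD, ha]
    rfl

theorem cycleCost_append {l₁ l₂ : List V} {a₁ b₁ a₂ b₂ : V}
    (ha₁ : l₁.head? = some a₁) (hb₁ : l₁.getLast? = some b₁)
    (ha₂ : l₂.head? = some a₂) (hb₂ : l₂.getLast? = some b₂) :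
    cycleCost c (l₁ ++ l₂) = pathCost c l₁ + c b₁ a₂ + pathCost c l₂ + c b₂ a₁ := by
  rw [cycleCost_eq_pathCost_add c (a := a₁) (b := b₂), pathCost_append c hb₁ ha₂]
  · simp [head?_append, ha₁]
  · simp [getLast?_append, hb₂]

theorem length_le_cycleCost (h : ∀ u v, 1 ≤ c u v) (l : List V) :
    (l.length : ℝ) ≤ cycleCost c l := by
  calc (l.length : ℝ) = ∑ _i : Fin l.length, (1 : ℝ) := by simp
    _ ≤ cycleCost c l := Finset.sum_le_sum fun _ _ => h _ _

theorem card_le_cycleCost [Fintype V] [DecidableEq V] (h : ∀ u v, 1 ≤ c u v) {l : List V}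
    (hnd : l.Nodup) (hl : l.toFinset = Finset.univ) : (Fintype.card V : ℝ) ≤ cycleCost c l := by
  rw [← Finset.card_univ, ← hl, toFinset_card_of_nodup hnd]
  exact length_le_cycleCost c h l

end List

section PathDist

variable {V : Type*} (E : V → V → Prop)

/-- Number of arcs of a shortest path; `0` when `v` is unreachable from `u` (`sInf ∅ = 0`). -/
noncomputable def pathDist (u v : V) : ℝ :=
  sInf {x | ∃ l : List V, IsPathOn E u v l ∧ ((l.length : ℝ) - 1) = x}

variable {E}

theorem IsPathOn.one_le_length_sub_one {u v : V} {l : List V} (h : IsPathOn E u v l) :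
    1 ≤ (l.length : ℝ) - 1 := by
  have : (2 : ℝ) ≤ l.length := by exact_mod_cast h.1
  linarith

theorem pathDist_le {u v : V} {l : List V} (h : IsPathOn E u v l) :
    pathDist E u v ≤ l.length - 1 :=
  csInf_le ⟨1, by rintro _ ⟨l', hl', rfl⟩; exact hl'.one_le_length_sub_one⟩ ⟨l, h, rfl⟩

theorem le_pathDist {u v : V} {C : ℝ} (hreach : ∃ l, IsPathOn E u v l)
    (hC : ∀ l, IsPathOn E u v l → C ≤ l.length - 1) : C ≤ pathDist E u v :=
  le_csInf (let ⟨l, hl⟩ := hreach; ⟨_, l, hl, rfl⟩) (by rintro _ ⟨l, hl, rfl⟩; exact hC l hl)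

theorem one_le_pathDist {u v : V} (hreach : ∃ l, IsPathOn E u v l) : 1 ≤ pathDist E u v :=
  le_pathDist hreach fun _ hl => hl.one_le_length_sub_one

theorem isPathOn_pair {u v : V} (h : E u v) : IsPathOn E u v [u, v] :=
  ⟨le_rfl, rfl, rfl, List.isChain_pair.mpr h⟩

theorem pathDist_eq_one {u v : V} (h : E u v) : pathDist E u v = 1 :=
  le_antisymm ((pathDist_le (isPathOn_pair h)).trans_eq (by norm_num))
    (one_le_pathDist ⟨_, isPathOn_pair h⟩)

section Potential

variable {g : V → ℝ} (hg : ∀ a b, E a b → g b ≤ g a + 1)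
include hg

theorem List.IsChain.sub_le_of_potential :
    ∀ {l : List V} (hl : l ≠ []), l.IsChain E →
      g (l.getLast hl) - g (l.head hl) ≤ l.length - 1
  | [_], _, _ => by simp
  | a :: b :: l, _, hc => by
    rw [List.isChain_cons_cons] at hc
    have ih := sub_le_of_potential (List.cons_ne_nil b l) hc.2
    have hab := hg a b hc.1
    simp only [List.getLast_cons_cons, List.head_cons, List.length_cons, Nat.cast_add,
      Nat.cast_one] at ih ⊢
    linarith

theorem IsPathOn.sub_le_of_potential {u v : V} {l : List V} (h : IsPathOn E u v l) :
    g v - g u ≤ l.length - 1 := by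
  obtain ⟨hlen, hu, hv, hc⟩ := h
  have hl : l ≠ [] := List.ne_nil_of_length_pos (by omega)
  rw [List.head?_eq_some_head hl, Option.some_inj] at hu
  rw [List.getLast?_eq_some_getLast hl, Option.some_inj] at hv
  rw [← hu, ← hv]
  exact List.IsChain.sub_le_of_potential hg hl hc

theorem sub_le_pathDist_of_potential {u v : V} (hreach : ∃ l, IsPathOn E u v l) :
    g v - g u ≤ pathDist E u v :=
  le_pathDist hreach fun _ hl => hl.sub_le_of_potential hg

end Potential

end PathDist

section Instance

variable {n : ℕ}

theorem dist18_eq_pathDist (u v : Fin (2 * n)) : dist18 n u v = pathDist (Erel n) u v := rfl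

theorem Erel.val_cases {a b : Fin (2 * n)} (h : Erel n a b) :
    (b : ℕ) = a + 1 ∨ ((a : ℕ) + 1 = 2 * n ∧ (b : ℕ) = 0) ∨ ((a : ℕ) = b + 1 ∧ (a : ℕ) ≠ n) := by
  have ha := a.isLt
  have hb := b.isLt
  rcases h with h | ⟨h, hcut₁, hcut₂⟩
  · rcases Nat.lt_or_ge ((a : ℕ) + 1) (2 * n) with ha' | ha'
    · rw [Nat.mod_eq_of_lt ha'] at h; omega
    · rw [show (a : ℕ) + 1 = 2 * n by omega, Nat.mod_self] at h; omega
  · rcases Nat.lt_or_ge ((b : ℕ) + 1) (2 * n) with hb' | hb'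
    · rw [Nat.mod_eq_of_lt hb'] at h; omega
    · rw [show (b : ℕ) + 1 = 2 * n by omega, Nat.mod_self] at h; omega

theorem Erel.val_le {a b : Fin (2 * n)} (h : Erel n a b) : (b : ℕ) ≤ a + 1 := by
  rcases h.val_cases with h | h | h <;> omega

/-- The index of `a + n` modulo `2 * n`. -/
def halfTurn (a : Fin (2 * n)) : ℕ := if (a : ℕ) < n then a + n else a - n

theorem Erel.halfTurn_le {a b : Fin (2 * n)} (h : Erel n a b) : halfTurn b ≤ halfTurn a + 1 := by
  unfold halfTurn
  rcases h.val_cases with h | h | h <;> split_ifs <;> omega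

variable (hn : 1 ≤ n)
include hn

theorem val_vtx_of_lt {k : ℕ} (hk : k < 2 * n) : (vtx n hn k : ℕ) = k :=
  Nat.mod_eq_of_lt hk

theorem vtx_val (a : Fin (2 * n)) : vtx n hn a = a :=
  Fin.ext (val_vtx_of_lt hn a.isLt)

theorem vtx_add_two_mul (k : ℕ) : vtx n hn (k + 2 * n) = vtx n hn k :=
  Fin.ext (Nat.add_mod_right k (2 * n))

theorem erel_vtx_succ (k : ℕ) : Erel n (vtx n hn k) (vtx n hn (k + 1)) :=
  Or.inl (by simp only [vtx, Nat.mod_add_mod])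

theorem erel_vtx_pred {j : ℕ} (hj : j + 1 < 2 * n) (hjn : j + 1 ≠ n) :
    Erel n (vtx n hn (j + 1)) (vtx n hn j) := by
  right
  rw [val_vtx_of_lt hn hj, val_vtx_of_lt hn (by omega), Nat.mod_eq_of_lt hj]
  omega

theorem isPathOn_vtx_range (a : ℕ) {m : ℕ} (hm : 1 ≤ m) :
    IsPathOn (Erel n) (vtx n hn a) (vtx n hn (a + m))
      ((List.range (m + 1)).map fun j => vtx n hn (a + j)) := by
  refine ⟨by simp; omega, by simp [List.head?_range], by simp [List.getLast?_range], ?_⟩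
  rw [List.Chain', List.isChain_map, List.isChain_range]
  exact fun j _ => erel_vtx_succ hn (a + j)

theorem exists_isPathOn (u v : Fin (2 * n)) : ∃ l, IsPathOn (Erel n) u v l := by
  have hv : vtx n hn (u + (v + 2 * n - u)) = v := by
    rw [show (u : ℕ) + (v + 2 * n - u) = v + 2 * n by omega, vtx_add_two_mul, vtx_val]
  have hp := isPathOn_vtx_range hn u (m := v + 2 * n - u) (by omega)
  rw [hv, vtx_val] at hp
  exact ⟨_, hp⟩

theorem dist18_vtx_add_le (a : ℕ) {m : ℕ} (hm : 1 ≤ m) :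
    dist18 n (vtx n hn a) (vtx n hn (a + m)) ≤ m := by
  simpa [dist18_eq_pathDist] using pathDist_le (isPathOn_vtx_range hn a hm)

theorem one_le_dist18 (u v : Fin (2 * n)) : 1 ≤ dist18 n u v :=
  one_le_pathDist (exists_isPathOn hn u v)

theorem dist18_vtx_zero_last :
    dist18 n (vtx n hn 0) (vtx n hn (2 * n - 1)) = 2 * (n : ℝ) - 1 := by
  apply le_antisymm
  · simpa [Nat.cast_sub (by omega : 1 ≤ 2 * n)] using
      dist18_vtx_add_le hn 0 (m := 2 * n - 1) (by omega)
  · have hlow := sub_le_pathDist_of_potential (g := fun a : Fin (2 * n) => ((a : ℕ) : ℝ))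
      (fun a b h => by exact_mod_cast h.val_le)
      (exists_isPathOn hn (vtx n hn 0) (vtx n hn (2 * n - 1)))
    rw [val_vtx_of_lt hn (by omega), val_vtx_of_lt hn (by omega), Nat.cast_sub (by omega)] at hlow
    simpa [dist18_eq_pathDist] using hlow

theorem dist18_vtx_half_pred :
    dist18 n (vtx n hn n) (vtx n hn (n - 1)) = 2 * (n : ℝ) - 1 := by
  apply le_antisymm
  · have hend : vtx n hn (n + (2 * n - 1)) = vtx n hn (n - 1) := by
      rw [show n + (2 * n - 1) = n - 1 + 2 * n by omega, vtx_add_two_mul]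
    simpa [hend, Nat.cast_sub (by omega : 1 ≤ 2 * n)] using
      dist18_vtx_add_le hn n (m := 2 * n - 1) (by omega)
  · have hlow := sub_le_pathDist_of_potential (g := fun a => (halfTurn a : ℝ))
      (fun a b h => by exact_mod_cast h.halfTurn_le)
      (exists_isPathOn hn (vtx n hn n) (vtx n hn (n - 1)))
    have hfirst : halfTurn (vtx n hn n) = 0 := by
      simp [halfTurn, val_vtx_of_lt hn (by omega : n < 2 * n)]
    have hlast : halfTurn (vtx n hn (n - 1)) = 2 * n - 1 := by
      simp only [halfTurn, val_vtx_of_lt hn (by omega : n - 1 < 2 * n)]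
      split_ifs <;> omega
    rw [hfirst, hlast, Nat.cast_sub (by omega)] at hlow
    simpa [dist18_eq_pathDist] using hlow

theorem pathCost_map_vtx_range_reverse :
    pathCost (dist18 n) ((List.range n).reverse.map (vtx n hn)) = (n : ℝ) - 1 :=
  List.pathCost_map_range_reverse _ hn fun k hk =>
    pathDist_eq_one (erel_vtx_pred hn (by omega) (by omega))

theorem pathCost_map_vtx_add_range_reverse :
    pathCost (dist18 n) ((List.range n).reverse.map fun k => vtx n hn (n + k)) = (n : ℝ) - 1 :=
  List.pathCost_map_range_reverse _ hn fun k hk =>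
    pathDist_eq_one (erel_vtx_pred hn (j := n + k) (by omega) (by omega))

theorem cycleCost_tourOpt : cycleCost (dist18 n) (tourOpt n hn) = 2 * (n : ℝ) := by
  have hclose : dist18 n (vtx n hn (2 * n - 1)) (vtx n hn 0) = 1 := by
    have h := erel_vtx_succ hn (2 * n - 1)
    rw [show 2 * n - 1 + 1 = 0 + 2 * n by omega, vtx_add_two_mul] at h
    exact pathDist_eq_one h
  rw [tourOpt, List.cycleCost_eq_pathCost_add _ (a := vtx n hn 0) (b := vtx n hn (2 * n - 1))
    (by simp [List.head?_range]; omega) (by simp [List.getLast?_range]; omega),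
    List.pathCost_map_range (dist18 n) (by omega) fun k _ => pathDist_eq_one (erel_vtx_succ hn k),
    hclose, Nat.cast_mul]
  ring

theorem cycleCost_tourBad : cycleCost (dist18 n) (tourBad n hn) = 6 * (n : ℝ) - 4 := by
  rw [tourBad, List.cycleCost_append _ (a₁ := vtx n hn (n - 1)) (b₁ := vtx n hn 0)
    (a₂ := vtx n hn (2 * n - 1)) (b₂ := vtx n hn n), pathCost_map_vtx_range_reverse,
    pathCost_map_vtx_add_range_reverse, dist18_vtx_zero_last, dist18_vtx_half_pred]
  · ring
  · simp [List.getLast?_range]; omega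
  · simp [List.head?_range]; omega
  · simp [List.getLast?_range, show n + (n - 1) = 2 * n - 1 by omega]; omega
  · simp [List.head?_range]; omega

theorem two_mul_le_cycleCost {l : List (Fin (2 * n))} (hnd : l.Nodup)
    (hl : l.toFinset = Finset.univ) : 2 * (n : ℝ) ≤ cycleCost (dist18 n) l := by
  simpa using List.card_le_cycleCost _ (one_le_dist18 hn) hnd hl

end Instance

theorem tendsto_six_mul_sub_four_div_two_mul :
    Tendsto (fun n : ℕ => (6 * (n : ℝ) - 4) / (2 * n)) atTop (𝓝 3) := by
  have h : Tendsto (fun n : ℕ => 3 - 2 / (n : ℝ)) atTop (𝓝 (3 - 0)) :=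
    tendsto_const_nhds.sub (tendsto_const_div_atTop_nhds_zero_nat 2)
  rw [sub_zero] at h
  refine h.congr' ?_
  filter_upwards [eventually_ne_atTop 0] with n hn
  field_simp
  ring

/-- in the metric closure of `G_n` one has
`d(v₁, v_{2n}) = 2n − 1`, `d(v_{n+1}, v_n) = 2n − 1`, each of the two descending
segments costs `n − 1`, the tour `(v_n, …, v₁, v_{2n}, …, v_{n+1})` costs `6n − 4`,
the optimal tour `(v₁, …, v_{2n})` costs `2n` (and every tour costs at least `2n`);
hence the ratio `(6n−4)/(2n)` tends to 3. -/
theorem stmt_18 :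
    (∀ (n : ℕ) (hn : 1 ≤ n),
      dist18 n (vtx n hn 0) (vtx n hn (2 * n - 1)) = 2 * (n : ℝ) - 1 ∧
      dist18 n (vtx n hn n) (vtx n hn (n - 1)) = 2 * (n : ℝ) - 1 ∧
      pathCost (dist18 n) ((List.range n).reverse.map (vtx n hn)) = (n : ℝ) - 1 ∧
      pathCost (dist18 n) ((List.range n).reverse.map (fun k => vtx n hn (n + k)))
        = (n : ℝ) - 1 ∧
      cycleCost (dist18 n) (tourBad n hn) = 6 * (n : ℝ) - 4 ∧
      cycleCost (dist18 n) (tourOpt n hn) = 2 * (n : ℝ) ∧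
      (∀ l : List (Fin (2 * n)), l.Nodup → l.toFinset = Finset.univ →
        2 * (n : ℝ) ≤ cycleCost (dist18 n) l)) ∧
    Filter.Tendsto (fun n : ℕ => (6 * (n : ℝ) - 4) / (2 * (n : ℝ)))
      Filter.atTop (nhds 3) :=
  ⟨fun _ hn => ⟨dist18_vtx_zero_last hn, dist18_vtx_half_pred hn,
    pathCost_map_vtx_range_reverse hn, pathCost_map_vtx_add_range_reverse hn,
    cycleCost_tourBad hn, cycleCost_tourOpt hn,
    fun _ => two_mul_le_cycleCost hn⟩, tendsto_six_mul_sub_four_div_two_mul⟩
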